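/- arXiv:2109.01635 — 4 statements merged into one kernel-verified Lean document; each statement's English description precedes it below -/
import Mathlib

section
/- Let C = 17/16. Let g, v, w ∈ ℝⁿ be vectors with nonnegative entries, and let X_a, X_b be positive real numbers satisfying X_a ≤ ‖g+v‖₂ ≤ C·X_a, X_b ≤ ‖v‖₂ ≤ C·X_b, and X_a ≤ C·X_b. Then ‖g+v+w‖₂ ≤ 2·‖v+w‖₂. -/
open RealInnerProductSpace

/-!
Chaining the approximations gives `‖g + v‖ ≤ C² ‖v‖`. Nonnegative entries make `v` and `w`
non-obtuse, so `‖v‖² + ‖w‖² ≤ ‖v + w‖²`, while `‖g + v + w‖ ≤ C² ‖v‖ + ‖w‖`; by Cauchy–Schwarz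
in `ℝ²` the latter is at most `√(1 + C⁴) · ‖v + w‖`, and `1 + C⁴ ≤ 4`.
-/

section InnerProductSpace

variable {E : Type*} [NormedAddCommGroup E] [InnerProductSpace ℝ E]

theorem norm_sq_add_norm_sq_le_of_inner_nonneg {v w : E} (h : 0 ≤ ⟪v, w⟫) :
    ‖v‖ ^ 2 + ‖w‖ ^ 2 ≤ ‖v + w‖ ^ 2 := by
  rw [norm_add_sq_real]
  linarith

theorem norm_add_le_mul_norm_add_of_inner_nonneg {u v w : E} {c k : ℝ}
    (hu : ‖u‖ ≤ c * ‖v‖) (hvw : 0 ≤ ⟪v, w⟫) (hk : 0 ≤ k) (hck : 1 + c ^ 2 ≤ k ^ 2) :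
    ‖u + w‖ ≤ k * ‖v + w‖ := by
  have hpyth := norm_sq_add_norm_sq_le_of_inner_nonneg hvw
  have hcs : (c * ‖v‖ + ‖w‖) ^ 2 ≤ (1 + c ^ 2) * (‖v‖ ^ 2 + ‖w‖ ^ 2) := by
    nlinarith [sq_nonneg (‖v‖ - c * ‖w‖)]
  have hsum_nonneg : 0 ≤ c * ‖v‖ + ‖w‖ := by positivity [(norm_nonneg u).trans hu]
  calc ‖u + w‖ ≤ ‖u‖ + ‖w‖ := norm_add_le u w
    _ ≤ c * ‖v‖ + ‖w‖ := by linarith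
    _ ≤ k * ‖v + w‖ := by
      refine (pow_le_pow_iff_left₀ hsum_nonneg (by positivity) two_ne_zero).mp ?_
      calc (c * ‖v‖ + ‖w‖) ^ 2 ≤ (1 + c ^ 2) * (‖v‖ ^ 2 + ‖w‖ ^ 2) := hcs
        _ ≤ k ^ 2 * ‖v + w‖ ^ 2 := by gcongr
        _ = (k * ‖v + w‖) ^ 2 := by ring

end InnerProductSpace

theorem EuclideanSpace.inner_nonneg_of_nonneg {ι : Type*} [Fintype ι]
    {v w : EuclideanSpace ℝ ι} (hv : ∀ i, 0 ≤ v i) (hw : ∀ i, 0 ≤ w i) : 0 ≤ ⟪v, w⟫ := by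
  rw [PiLp.inner_apply]
  exact Finset.sum_nonneg fun i _ => mul_nonneg (hw i) (hv i)

theorem l2_smoothness_general (n : ℕ) (g v w : EuclideanSpace ℝ (Fin n))
    (hv : ∀ i, 0 ≤ v i) (hw : ∀ i, 0 ≤ w i)
    (Xa Xb : ℝ)
    (hXa2 : ‖g + v‖ ≤ (17 / 16) * Xa)
    (hXb1 : Xb ≤ ‖v‖)
    (hab : Xa ≤ (17 / 16) * Xb) :
    ‖g + v + w‖ ≤ 2 * ‖v + w‖ := by
  have hgv : ‖g + v‖ ≤ (17 / 16) ^ 2 * ‖v‖ :=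
    calc ‖g + v‖ ≤ (17 / 16) * Xa := hXa2
      _ ≤ (17 / 16) * ((17 / 16) * Xb) := by gcongr
      _ = (17 / 16) ^ 2 * Xb := by ring
      _ ≤ (17 / 16) ^ 2 * ‖v‖ := by gcongr
  exact norm_add_le_mul_norm_add_of_inner_nonneg hgv
    (EuclideanSpace.inner_nonneg_of_nonneg hv hw) zero_le_two (by norm_num)

/-- Smoothness of the L₂ norm (Braverman–Ostrovsky): with `C = 17/16`, if `Xₐ` is a
`C`-approximation of `‖g + v‖₂`, `X_b` is a `C`-approximation of `‖v‖₂`, and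
`Xₐ ≤ C · X_b`, then for any further nonnegative vector `w` we have
`‖g + v + w‖₂ ≤ 2 · ‖v + w‖₂`. -/
theorem l2_smoothness (n : ℕ) (g v w : EuclideanSpace ℝ (Fin n))
    (hg : ∀ i, 0 ≤ g i) (hv : ∀ i, 0 ≤ v i) (hw : ∀ i, 0 ≤ w i)
    (Xa Xb : ℝ) (hXa : 0 < Xa) (hXb : 0 < Xb)
    (hXa1 : Xa ≤ ‖g + v‖) (hXa2 : ‖g + v‖ ≤ (17 / 16) * Xa)
    (hXb1 : Xb ≤ ‖v‖) (hXb2 : ‖v‖ ≤ (17 / 16) * Xb)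
    (hab : Xa ≤ (17 / 16) * Xb) :
    ‖g + v + w‖ ≤ 2 * ‖v + w‖ :=
  l2_smoothness_general n g v w hv hw Xa Xb hXa2 hXb1 hab
end

section
/- Let G : [0,∞) → [0,∞) be convex and strictly increasing with G(0) = 0, let 0 < Δ₁ ≤ Δ₂, and let u, t₁, …, t_k be real numbers all lying in the interval [Δ₁, Δ₂]. Then G(u)/(Σᵢ₌₁ᵏ G(tᵢ) + G(u)) ≤ Δ · u/(Σᵢ₌₁ᵏ tᵢ + u), where Δ = (G(Δ₂)·Δ₁)/(G(Δ₁)·Δ₂). -/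
/-! For convex `G` with `G 0 = 0` the slope `G s / s` is nondecreasing in `s > 0`, so on
`[Δ₁, Δ₂]` we have `(G Δ₁ / Δ₁) s ≤ G s ≤ (G Δ₂ / Δ₂) s`. Bounding the numerator above and
every term of the denominator below loses exactly the factor `(G Δ₂ / Δ₂) / (G Δ₁ / Δ₁)`. -/

open Finset Set

theorem ConvexOn.div_le_div_of_map_zero {𝕜 : Type*} [Field 𝕜] [LinearOrder 𝕜]
    [IsStrictOrderedRing 𝕜] {f : 𝕜 → 𝕜} (hf : ConvexOn 𝕜 (Ici 0) f) (hf0 : f 0 = 0)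
    {x y : 𝕜} (hx : 0 < x) (hxy : x ≤ y) : f x / x ≤ f y / y := by
  simpa [hf0] using hf.secant_mono self_mem_Ici (mem_Ici.2 hx.le)
    (mem_Ici.2 (hx.le.trans hxy)) hx.ne' (hx.trans_le hxy).ne' hxy

theorem div_sum_add_le_of_linear_bounds {ι : Type*} [Fintype ι] {g t : ι → ℝ}
    {a u c₁ c₂ : ℝ} (hc₁ : 0 < c₁) (hS : 0 < ∑ i, t i + u) (ha : 0 ≤ a)
    (hg : ∀ i, c₁ * t i ≤ g i) (hau : c₁ * u ≤ a) (hua : a ≤ c₂ * u) :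
    a / (∑ i, g i + a) ≤ c₂ / c₁ * (u / (∑ i, t i + u)) := by
  have hden : c₁ * (∑ i, t i + u) ≤ ∑ i, g i + a := by
    rw [mul_add, mul_sum]
    exact add_le_add (sum_le_sum fun i _ => hg i) hau
  calc a / (∑ i, g i + a) ≤ c₂ * u / (c₁ * (∑ i, t i + u)) :=
        div_le_div₀ (ha.trans hua) hua (mul_pos hc₁ hS) hden
    _ = c₂ / c₁ * (u / (∑ i, t i + u)) := by field_simp

theorem orlicz_sensitivity_bound_general (G : ℝ → ℝ)
    (hGconv : ConvexOn ℝ (Set.Ici 0) G)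
    (hGmono : StrictMonoOn G (Set.Ici 0))
    (hG0 : G 0 = 0)
    (Δ₁ Δ₂ : ℝ) (hΔ₁ : 0 < Δ₁)
    (k : ℕ) (t : Fin k → ℝ) (u : ℝ)
    (hu : u ∈ Set.Icc Δ₁ Δ₂) (ht : ∀ i, t i ∈ Set.Icc Δ₁ Δ₂) :
    G u / (∑ i, G (t i) + G u) ≤
      (G Δ₂ * Δ₁) / (G Δ₁ * Δ₂) * (u / (∑ i, t i + u)) := by
  have hGΔ₁ : 0 < G Δ₁ := hG0 ▸ hGmono self_mem_Ici (mem_Ici.2 hΔ₁.le) hΔ₁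
  have hu0 : 0 < u := hΔ₁.trans_le hu.1
  have hGu : 0 ≤ G u := hG0 ▸ hGmono.monotoneOn self_mem_Ici (mem_Ici.2 hu0.le) hu0.le
  have hlower : ∀ s ∈ Icc Δ₁ Δ₂, G Δ₁ / Δ₁ * s ≤ G s := fun s hs => by
    have := hGconv.div_le_div_of_map_zero hG0 hΔ₁ hs.1
    rwa [le_div_iff₀ (hΔ₁.trans_le hs.1)] at this
  have hupper : G u ≤ G Δ₂ / Δ₂ * u := by
    have := hGconv.div_le_div_of_map_zero hG0 hu0 hu.2
    rwa [div_le_iff₀ hu0] at this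
  have hS : 0 < ∑ i, t i + u :=
    add_pos_of_nonneg_of_pos (sum_nonneg fun i _ => (hΔ₁.trans_le (ht i).1).le) hu0
  convert div_sum_add_le_of_linear_bounds (div_pos hGΔ₁ hΔ₁) hS hGu
    (fun i => hlower (t i) (ht i)) (hlower u hu) hupper using 2
  field_simp

/-- Key inequality for online sensitivity sampling for Orlicz norms: for an Orlicz
function `G`, `0 < Δ₁ ≤ Δ₂`, and `u, t₁, …, t_k ∈ [Δ₁, Δ₂]`,
`G u / (∑ i, G (t i) + G u) ≤ Δ · u / (∑ i, t i + u)` where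
`Δ = (G Δ₂ · Δ₁) / (G Δ₁ · Δ₂)`. -/
theorem orlicz_sensitivity_bound (G : ℝ → ℝ)
    (hGconv : ConvexOn ℝ (Set.Ici 0) G)
    (hGmono : StrictMonoOn G (Set.Ici 0))
    (hG0 : G 0 = 0)
    (hGnn : ∀ t, 0 ≤ t → 0 ≤ G t)
    (Δ₁ Δ₂ : ℝ) (hΔ₁ : 0 < Δ₁) (hΔ : Δ₁ ≤ Δ₂)
    (k : ℕ) (t : Fin k → ℝ) (u : ℝ)
    (hu : u ∈ Set.Icc Δ₁ Δ₂) (ht : ∀ i, t i ∈ Set.Icc Δ₁ Δ₂) :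
    G u / (∑ i, G (t i) + G u) ≤
      (G Δ₂ * Δ₁) / (G Δ₁ * Δ₂) * (u / (∑ i, t i + u)) :=
  orlicz_sensitivity_bound_general G hGconv hGmono hG0 Δ₁ Δ₂ hΔ₁ k t u hu ht
end

section
/- Let ℓ : ℝⁿ → ℝ be a symmetric norm, let β ∈ (0,1), and let v₁, …, v_k ∈ ℝⁿ be vectors with pairwise disjoint supports. Set V = v₁ + ⋯ + v_k, let S = {i ∈ [k] : ℓ(vᵢ) ≥ β·ℓ(V)}, and let V' = Σ_{i∈S} vᵢ. Then (1 − kβ)·ℓ(V) ≤ ℓ(V') ≤ ℓ(V). -/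
/-!
Zeroing some coordinates of a vector cannot increase a norm that only sees absolute values:
if `y` agrees with `x` or vanishes in each coordinate, then `w = 2y - x` has `|w| = |x|`, so
`y = (x + w) / 2` gives `ℓ y ≤ ℓ x`. Disjointness of supports makes `V'` such a masking of `V`,
which is the upper bound. For the lower bound, `V - V'` is a sum of at most `k` levels, each of
norm below `β ℓ(V)`, and the triangle inequality finishes.
-/

open Finset

section

variable {ι : Type*} {ℓ : (ι → ℝ) → ℝ}

theorem nonneg_of_abs_smul_of_subadditive
    (hsmul : ∀ (c : ℝ) (x : ι → ℝ), ℓ (c • x) = |c| * ℓ x)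
    (htri : ∀ x y : ι → ℝ, ℓ (x + y) ≤ ℓ x + ℓ y) (x : ι → ℝ) : 0 ≤ ℓ x := by
  have h0 : ℓ 0 = 0 := by simpa using hsmul 0 0
  have hneg : ℓ (-x) = ℓ x := by simpa using hsmul (-1) x
  have := htri x (-x)
  rw [add_neg_cancel, h0, hneg] at this
  linarith

theorem le_of_forall_eq_or_eq_zero
    (hsmul : ∀ (c : ℝ) (x : ι → ℝ), ℓ (c • x) = |c| * ℓ x)
    (htri : ∀ x y : ι → ℝ, ℓ (x + y) ≤ ℓ x + ℓ y)
    (habs : ∀ x : ι → ℝ, ℓ (fun i => |x i|) = ℓ x)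
    {x y : ι → ℝ} (h : ∀ t, y t = x t ∨ y t = 0) : ℓ y ≤ ℓ x := by
  set w : ι → ℝ := (2 : ℝ) • y - x
  have hw : ℓ w = ℓ x := by
    rw [← habs w, ← habs x]
    congr 1
    funext t
    rcases h t with h | h <;> simp only [w, Pi.sub_apply, Pi.smul_apply, smul_eq_mul, h]
    · ring_nf
    · simp
  have hy : y = (2⁻¹ : ℝ) • (x + w) := by
    ext t
    simp only [w, Pi.smul_apply, Pi.add_apply, Pi.sub_apply, smul_eq_mul]
    ring
  calc ℓ y = 2⁻¹ * ℓ (x + w) := by rw [hy, hsmul, abs_of_pos (by norm_num)]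
    _ ≤ 2⁻¹ * (ℓ x + ℓ w) := by gcongr; exact htri x w
    _ = ℓ x := by rw [hw]; ring

end

theorem sum_apply_eq_or_eq_zero_of_disjoint {κ ι : Type*} [Fintype κ] (v : κ → ι → ℝ)
    (hdisj : ∀ i j, i ≠ j → ∀ t, v i t = 0 ∨ v j t = 0) (s : Finset κ) (t : ι) :
    (∑ i ∈ s, v i) t = (∑ i, v i) t ∨ (∑ i ∈ s, v i) t = 0 := by
  simp only [Finset.sum_apply]
  by_cases h : ∃ i ∈ s, v i t ≠ 0
  · obtain ⟨i, his, hit⟩ := h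
    have hothers : ∀ j, j ≠ i → v j t = 0 := fun j hj =>
      (hdisj j i hj t).resolve_right hit
    left
    rw [sum_eq_single_of_mem i his fun j _ hj => hothers j hj,
      sum_eq_single_of_mem i (mem_univ i) fun j _ hj => hothers j hj]
  · push Not at h
    exact Or.inr (sum_eq_zero h)

theorem le_sum_filter_add_card_mul {κ E : Type*} [Fintype κ] [AddCommMonoid E] {ℓ : E → ℝ}
    (h0 : ℓ 0 = 0) (htri : ∀ x y, ℓ (x + y) ≤ ℓ x + ℓ y) (v : κ → E) {c : ℝ} (hc : 0 ≤ c) :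
    ℓ (∑ i, v i) ≤ ℓ (∑ i ∈ univ.filter (fun i => c ≤ ℓ (v i)), v i) + Fintype.card κ * c := by
  set small := univ.filter (fun i => ¬ c ≤ ℓ (v i))
  have hsmall : ℓ (∑ i ∈ small, v i) ≤ Fintype.card κ * c :=
    calc ℓ (∑ i ∈ small, v i) ≤ ∑ i ∈ small, ℓ (v i) := le_sum_of_subadditive ℓ h0.le htri _ _
      _ ≤ #small • c := sum_le_card_nsmul _ _ _ fun i hi => (not_le.1 (mem_filter.1 hi).2).le
      _ ≤ Fintype.card κ * c := by
        rw [nsmul_eq_mul]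
        gcongr
        exact_mod_cast card_le_univ small
  calc ℓ (∑ i, v i)
      = ℓ ((∑ i ∈ univ.filter (fun i => c ≤ ℓ (v i)), v i) + ∑ i ∈ small, v i) := by
        rw [sum_filter_add_sum_filter_not]
    _ ≤ _ := (htri _ _).trans (by gcongr)

theorem contributing_levels_general (n k : ℕ) (ℓ : (Fin n → ℝ) → ℝ)
    (hsmul : ∀ (c : ℝ) (x : Fin n → ℝ), ℓ (c • x) = |c| * ℓ x)
    (htri : ∀ x y : Fin n → ℝ, ℓ (x + y) ≤ ℓ x + ℓ y)
    (habs : ∀ x : Fin n → ℝ, ℓ (fun i => |x i|) = ℓ x)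
    (β : ℝ) (hβ0 : 0 < β)
    (v : Fin k → (Fin n → ℝ))
    (hdisj : ∀ i j : Fin k, i ≠ j → ∀ t : Fin n, v i t = 0 ∨ v j t = 0)
    (V V' : Fin n → ℝ)
    (hV : V = ∑ i, v i)
    (hV' : V' = ∑ i ∈ Finset.univ.filter (fun i => β * ℓ V ≤ ℓ (v i)), v i) :
    (1 - k * β) * ℓ V ≤ ℓ V' ∧ ℓ V' ≤ ℓ V := by
  have hnonneg := nonneg_of_abs_smul_of_subadditive hsmul htri
  have h0 : ℓ 0 = 0 := by simpa using hsmul 0 0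
  have hlower := le_sum_filter_add_card_mul h0 htri v (mul_nonneg hβ0.le (hnonneg V))
  rw [← hV, ← hV', Fintype.card_fin] at hlower
  refine ⟨by linarith, le_of_forall_eq_or_eq_zero hsmul htri habs fun t => ?_⟩
  rw [hV', hV]
  exact sum_apply_eq_or_eq_zero_of_disjoint v hdisj _ t

/-- Removing non-β-contributing levels: let `ℓ` be a symmetric norm on `ℝⁿ`,
`β ∈ (0,1)`, and `v₁, …, v_k` vectors with pairwise disjoint supports summing to `V`.
If `V'` is the sum of those `vᵢ` with `ℓ vᵢ ≥ β · ℓ V`, then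
`(1 - k β) · ℓ V ≤ ℓ V' ≤ ℓ V`. -/
theorem contributing_levels (n k : ℕ) (ℓ : (Fin n → ℝ) → ℝ)
    (hzero : ∀ x : Fin n → ℝ, ℓ x = 0 ↔ x = 0)
    (hsmul : ∀ (c : ℝ) (x : Fin n → ℝ), ℓ (c • x) = |c| * ℓ x)
    (htri : ∀ x y : Fin n → ℝ, ℓ (x + y) ≤ ℓ x + ℓ y)
    (hperm : ∀ (σ : Equiv.Perm (Fin n)) (x : Fin n → ℝ), ℓ (x ∘ σ) = ℓ x)
    (habs : ∀ x : Fin n → ℝ, ℓ (fun i => |x i|) = ℓ x)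
    (β : ℝ) (hβ0 : 0 < β) (hβ1 : β < 1)
    (v : Fin k → (Fin n → ℝ))
    (hdisj : ∀ i j : Fin k, i ≠ j → ∀ t : Fin n, v i t = 0 ∨ v j t = 0)
    (V V' : Fin n → ℝ)
    (hV : V = ∑ i, v i)
    (hV' : V' = ∑ i ∈ Finset.univ.filter (fun i => β * ℓ V ≤ ℓ (v i)), v i) :
    (1 - k * β) * ℓ V ≤ ℓ V' ∧ ℓ V' ≤ ℓ V :=
  contributing_levels_general n k ℓ hsmul htri habs β hβ0 v hdisj V V' hV hV'
end

section
/- Let ν ∈ (0,1/4), η ∈ (0,1), and let s, F be positive reals with F ≤ s ≤ 2F. Let t ≥ 0, m ≥ 0, and ĥ ≥ 0 be reals with m ≤ (νη/16)·s and (t − m)/(1 + ν/4) ≤ ĥ ≤ t − m. Then: (i) if t ≥ η·s, then ĥ ≥ (η/2)·F; and (ii) if ĥ ≥ (η/2)·F, then ĥ ≤ t ≤ (1+ν)·ĥ. -/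
/-- Arithmetic core of the heavy-hitter accuracy lemma: with `ν ∈ (0,1/4)`,
`η ∈ (0,1)`, `F ≤ s ≤ 2F`, missed mass `m ≤ (νη/16)·s`, and tracked estimate `fhat`
satisfying `(t - m)/(1 + ν/4) ≤ fhat ≤ t - m`, (i) every `η`-heavy item (`t ≥ η·s`)
passes the threshold `fhat ≥ (η/2)·F`, and (ii) every reported item satisfies
`fhat ≤ t ≤ (1+ν)·fhat`. -/
theorem heavy_hitter_arith (ν η s F t m fhat : ℝ)
    (hν0 : 0 < ν) (hν1 : ν < 1 / 4)
    (hη0 : 0 < η) (hη1 : η < 1)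
    (hs : 0 < s) (hF : 0 < F) (hFs : F ≤ s) (hsF : s ≤ 2 * F)
    (ht : 0 ≤ t) (hm : 0 ≤ m) (hfhat : 0 ≤ fhat)
    (hmiss : m ≤ ν * η / 16 * s)
    (hlo : (t - m) / (1 + ν / 4) ≤ fhat) (hhi : fhat ≤ t - m) :
    (η * s ≤ t → η / 2 * F ≤ fhat) ∧
    (η / 2 * F ≤ fhat → fhat ≤ t ∧ t ≤ (1 + ν) * fhat) := by
  have hd : 0 < 1 + ν / 4 := by linarith
  have hlo' : t - m ≤ (1 + ν / 4) * fhat := by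
    have := (div_le_iff₀ hd).mp hlo
    linarith
  constructor
  · intro hheavy
    nlinarith [mul_pos hν0 hη0, mul_le_mul_of_nonneg_left hFs (le_of_lt hη0),
      mul_nonneg hν0.le hfhat, mul_pos hη0 hs]
  · intro hrep
    refine ⟨by linarith, ?_⟩
    have hmF : m ≤ ν * η / 8 * F := by nlinarith
    have : m ≤ ν / 4 * fhat := by nlinarith
    nlinarith
end
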